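/- arXiv:2603.20523 — 3 statements merged into one kernel-verified Lean document; each statement's English description precedes it below -/
import Mathlib

section
/- Let H be a Hilbert space and T, S densely defined operators on H such that (i) ⟨Tu, v⟩ = ⟨u, Sv⟩ for all u ∈ D(T), v ∈ D(S); (ii) T and S are Fredholm operators of index 0; (iii) dim ker T = dim ker S. Then S equals the Hilbert space adjoint T* of T. -/
open scoped RealInnerProductSpace

/-- For a closed submodule `K` of a real Hilbert space, the orthogonal complement
has the same finrank as the quotient `H ⧸ K`. -/
lemma finrank_orthogonal_eq_finrank_quotient
    {H : Type*} [NormedAddCommGroup H] [InnerProductSpace ℝ H] [CompleteSpace H]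
    (K : Submodule ℝ H) (hK : IsClosed (K : Set H)) :
    Module.finrank ℝ Kᗮ = Module.finrank ℝ (H ⧸ K) := by
  haveI : CompleteSpace K := hK.completeSpace_coe
  exact ((Submodule.quotientEquivOfIsCompl K Kᗮ
    Submodule.isCompl_orthogonal_of_hasOrthogonalProjection).finrank_eq).symm

lemma fd_orthogonal_of_fd_quotient
    {H : Type*} [NormedAddCommGroup H] [InnerProductSpace ℝ H] [CompleteSpace H]
    (K : Submodule ℝ H) (hK : IsClosed (K : Set H))
    [FiniteDimensional ℝ (H ⧸ K)] : FiniteDimensional ℝ Kᗮ := by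
  haveI : CompleteSpace K := hK.completeSpace_coe
  exact Module.Finite.equiv (Submodule.quotientEquivOfIsCompl K Kᗮ
    Submodule.isCompl_orthogonal_of_hasOrthogonalProjection)

/-- If `T, S` are densely defined operators on a real Hilbert space `H`,
formally adjoint to each other, both Fredholm of index `0`, and `dim ker T = dim ker S`,
then `S` equals the Hilbert space adjoint `T*` of `T`, i.e. the domain of `S` is exactly
`D(T*) = {v : ∃ w, ⟪Tu,v⟫ = ⟪u,w⟫ for all u ∈ D(T)}` and on it `S` takes the (unique)
value `w` prescribed by the adjoint relation. -/
theorem eq_adjoint_of_formal_adjoint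
    {H : Type*} [NormedAddCommGroup H] [InnerProductSpace ℝ H] [CompleteSpace H]
    (DT DS : Submodule ℝ H) (T : DT →ₗ[ℝ] H) (S : DS →ₗ[ℝ] H)
    (hDT : Dense (DT : Set H)) (hDS : Dense (DS : Set H))
    (hAdj : ∀ (u : DT) (v : DS), ⟪T u, (v : H)⟫ = ⟪(u : H), S v⟫)
    (hTclosed : IsClosed ((LinearMap.range T : Submodule ℝ H) : Set H))
    (hSclosed : IsClosed ((LinearMap.range S : Submodule ℝ H) : Set H))
    [FiniteDimensional ℝ (LinearMap.ker T)] [FiniteDimensional ℝ (LinearMap.ker S)]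
    [FiniteDimensional ℝ (H ⧸ LinearMap.range T)]
    [FiniteDimensional ℝ (H ⧸ LinearMap.range S)]
    (hTind : Module.finrank ℝ (LinearMap.ker T)
      = Module.finrank ℝ (H ⧸ LinearMap.range T))
    (hSind : Module.finrank ℝ (LinearMap.ker S)
      = Module.finrank ℝ (H ⧸ LinearMap.range S))
    (hker : Module.finrank ℝ (LinearMap.ker T) = Module.finrank ℝ (LinearMap.ker S)) :
    {v : H | ∃ w : H, ∀ u : DT, ⟪T u, v⟫ = ⟪(u : H), w⟫} = (DS : Set H) ∧
      ∀ (v : DS) (w : H), (∀ u : DT, ⟪T u, (v : H)⟫ = ⟪(u : H), w⟫) → w = S v := by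
  haveI : CompleteSpace (LinearMap.range S : Submodule ℝ H) := hSclosed.completeSpace_coe
  haveI : CompleteSpace (LinearMap.range T : Submodule ℝ H) := hTclosed.completeSpace_coe
  haveI : FiniteDimensional ℝ ((LinearMap.range S)ᗮ : Submodule ℝ H) :=
    fd_orthogonal_of_fd_quotient _ hSclosed
  haveI : FiniteDimensional ℝ ((LinearMap.range T)ᗮ : Submodule ℝ H) :=
    fd_orthogonal_of_fd_quotient _ hTclosed
  set KT := (LinearMap.ker T).map DT.subtype with hKTdef
  set KS := (LinearMap.ker S).map DS.subtype with hKSdef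
  have hfrKT : Module.finrank ℝ (LinearMap.ker T) = Module.finrank ℝ KT :=
    (Submodule.equivMapOfInjective DT.subtype DT.injective_subtype
      (LinearMap.ker T)).finrank_eq
  have hfrKS : Module.finrank ℝ (LinearMap.ker S) = Module.finrank ℝ KS :=
    (Submodule.equivMapOfInjective DS.subtype DS.injective_subtype
      (LinearMap.ker S)).finrank_eq
  -- ker T ⊆ (range S)ᗮ
  have hKTle : KT ≤ (LinearMap.range S)ᗮ := by
    rintro x ⟨u, hu, rfl⟩
    rw [Submodule.mem_orthogonal]
    rintro y ⟨v, rfl⟩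
    have : ⟪T u, (v : H)⟫ = ⟪(u : H), S v⟫ := hAdj u v
    rw [LinearMap.mem_ker.mp hu] at this
    simp only [inner_zero_left] at this
    rw [real_inner_comm]
    exact this.symm
  -- ker S ⊆ (range T)ᗮ
  have hKSle : KS ≤ (LinearMap.range T)ᗮ := by
    rintro x ⟨v, hv, rfl⟩
    rw [Submodule.mem_orthogonal]
    rintro y ⟨u, rfl⟩
    have : ⟪T u, (v : H)⟫ = ⟪(u : H), S v⟫ := hAdj u v
    rw [LinearMap.mem_ker.mp hv] at this
    simpa using this
  have hKT_eq : KT = (LinearMap.range S)ᗮ := by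
    refine Submodule.eq_of_le_of_finrank_eq hKTle ?_
    rw [← hfrKT, finrank_orthogonal_eq_finrank_quotient _ hSclosed, hker, hSind]
  have hKS_eq : KS = (LinearMap.range T)ᗮ := by
    refine Submodule.eq_of_le_of_finrank_eq hKSle ?_
    rw [← hfrKS, finrank_orthogonal_eq_finrank_quotient _ hTclosed, ← hker, hTind]
  -- uniqueness from density of DT
  have dense_zero : ∀ z : H, (∀ u : DT, ⟪(u : H), z⟫ = 0) → z = 0 := by
    intro z hz
    have hcl : closure (DT : Set H) ⊆ {x : H | ⟪x, z⟫ = 0} :=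
      closure_minimal (fun x hx => hz ⟨x, hx⟩)
        (isClosed_eq (continuous_id.inner continuous_const) continuous_const)
    have hmem : z ∈ closure (DT : Set H) := by rw [hDT.closure_eq]; trivial
    have : ⟪z, z⟫ = 0 := hcl hmem
    exact inner_self_eq_zero.mp this
  have huniq : ∀ (v : DS) (w : H), (∀ u : DT, ⟪T u, (v : H)⟫ = ⟪(u : H), w⟫) → w = S v := by
    intro v w h
    have : ∀ u : DT, ⟪(u : H), w - S v⟫ = 0 := by
      intro u
      rw [inner_sub_right, ← h u, ← hAdj u v, sub_self]
    have := dense_zero _ this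
    rw [sub_eq_zero] at this
    exact this
  refine ⟨Set.Subset.antisymm ?_ ?_, huniq⟩
  · -- D(T*) ⊆ DS
    rintro v ⟨w, hw⟩
    -- decompose w = a + b with a ∈ range S, b ∈ (range S)ᗮ = KT
    have htop : (LinearMap.range S) ⊔ (LinearMap.range S)ᗮ = ⊤ :=
      (Submodule.isCompl_orthogonal_of_hasOrthogonalProjection
        (K := LinearMap.range S)).codisjoint.eq_top
    obtain ⟨a, ha, b, hb, hab⟩ := Submodule.mem_sup.mp
      (htop ▸ Submodule.mem_top : w ∈ (LinearMap.range S) ⊔ (LinearMap.range S)ᗮ)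
    obtain ⟨v₀, rfl⟩ := ha
    rw [← hKT_eq] at hb
    obtain ⟨k, hk, hkb⟩ := hb
    -- show b = 0
    have hb0 : b = 0 := by
      have h1 : ⟪T k, v⟫ = ⟪(k : H), S v₀ + b⟫ := hab ▸ hw k
      rw [LinearMap.mem_ker.mp hk, inner_zero_left, inner_add_right,
        ← hAdj k v₀, LinearMap.mem_ker.mp hk, inner_zero_left, zero_add] at h1
      rw [← hkb] at h1 ⊢
      exact inner_self_eq_zero.mp h1.symm
    rw [hb0, add_zero] at hab
    -- v - v₀ ∈ (range T)ᗮ = KS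
    have hdiff : v - (v₀ : H) ∈ (LinearMap.range T)ᗮ := by
      rw [Submodule.mem_orthogonal]
      rintro y ⟨u, rfl⟩
      rw [inner_sub_right, hw u, ← hab, ← hAdj u v₀, sub_self]
    rw [← hKS_eq] at hdiff
    obtain ⟨d, _, hd⟩ := hdiff
    have hd' : (d : H) = v - (v₀ : H) := hd
    have : v = (d : H) + (v₀ : H) := by rw [hd']; abel
    rw [this]
    exact DS.add_mem d.2 v₀.2
  · -- DS ⊆ D(T*)
    intro v hv
    exact ⟨S ⟨v, hv⟩, fun u => hAdj u ⟨v, hv⟩⟩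
end

section
/- Let P⁻, P⁺ : Λ → Mat(d,ℝ) be continuous families of projections on a topological space Λ. Then the family P : Λ → L(H¹([−τ₀,τ₀],ℝᵈ)) defined by (P_λ x)(t) = x(t) − ((τ₀−t)/2τ₀)·P⁻_λ x(−τ₀) − ((τ₀+t)/2τ₀)·(I − P⁺_λ)x(τ₀) consists of bounded projections (P_λ² = P_λ) whose range is exactly {x ∈ H¹ : x(−τ₀) ∈ ker P⁻_λ, x(τ₀) ∈ range P⁺_λ}. -/
open Set

/-- Given continuous families `P⁻, P⁺ : Λ → Mat(d,ℝ)` of projections,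
the family `P_λ` on functions on `[-τ₀, τ₀]` defined by
`(P_λ x)(t) = x(t) − ((τ₀−t)/2τ₀)·P⁻_λ x(−τ₀) − ((τ₀+t)/2τ₀)·(I − P⁺_λ)x(τ₀)`
consists of bounded linear projections whose range is exactly
`{x : x(−τ₀) ∈ ker P⁻_λ, x(τ₀) ∈ range P⁺_λ}`. -/
theorem boundary_projection_family {d : ℕ} (τ₀ : ℝ) (hτ : 0 < τ₀)
    {Λ : Type*} [TopologicalSpace Λ]
    (Pm Pp : Λ → Matrix (Fin d) (Fin d) ℝ)
    (hPm : Continuous Pm) (hPp : Continuous Pp)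
    (hPmProj : ∀ lam, Pm lam * Pm lam = Pm lam)
    (hPpProj : ∀ lam, Pp lam * Pp lam = Pp lam)
    (P : Λ → C(Icc (-τ₀) τ₀, Fin d → ℝ) →ₗ[ℝ] C(Icc (-τ₀) τ₀, Fin d → ℝ))
    (hP : ∀ (lam : Λ) (x : C(Icc (-τ₀) τ₀, Fin d → ℝ)) (t : Icc (-τ₀) τ₀),
      P lam x t = x t
        - ((τ₀ - (t : ℝ)) / (2 * τ₀)) •
            (Pm lam).mulVec (x ⟨-τ₀, by constructor <;> linarith⟩)
        - ((τ₀ + (t : ℝ)) / (2 * τ₀)) •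
            ((1 - Pp lam).mulVec (x ⟨τ₀, by constructor <;> linarith⟩))) :
    ∀ lam : Λ,
      (∀ x, P lam (P lam x) = P lam x) ∧
      (∃ M : ℝ, ∀ x, ‖P lam x‖ ≤ M * ‖x‖) ∧
      (LinearMap.range (P lam) : Set C(Icc (-τ₀) τ₀, Fin d → ℝ)) =
        {x : C(Icc (-τ₀) τ₀, Fin d → ℝ) |
          (Pm lam).mulVec (x ⟨-τ₀, by constructor <;> linarith⟩) = 0 ∧
          (Pp lam).mulVec (x ⟨τ₀, by constructor <;> linarith⟩)
            = x ⟨τ₀, by constructor <;> linarith⟩} := by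
  intro lam
  have ha : (-τ₀) ∈ Icc (-τ₀) τ₀ := ⟨le_refl _, by linarith⟩
  have hb : τ₀ ∈ Icc (-τ₀) τ₀ := ⟨by linarith, le_refl _⟩
  set a : Icc (-τ₀) τ₀ := ⟨-τ₀, ha⟩ with ha'
  set b : Icc (-τ₀) τ₀ := ⟨τ₀, hb⟩ with hb'
  have h2τ : (2 : ℝ) * τ₀ ≠ 0 := by positivity
  have hPa : ∀ x, P lam x a = x a - (Pm lam).mulVec (x a) := by
    intro x
    rw [hP]
    have e1 : (τ₀ - ((a : Icc (-τ₀) τ₀) : ℝ)) / (2 * τ₀) = 1 := by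
      rw [ha']; field_simp; ring
    have e2 : (τ₀ + ((a : Icc (-τ₀) τ₀) : ℝ)) / (2 * τ₀) = 0 := by
      rw [ha']; simp
    rw [e1, e2, one_smul, zero_smul, sub_zero]
  have hPb : ∀ x, P lam x b = (Pp lam).mulVec (x b) := by
    intro x
    rw [hP]
    have e1 : (τ₀ - ((b : Icc (-τ₀) τ₀) : ℝ)) / (2 * τ₀) = 0 := by
      rw [hb']; simp
    have e2 : (τ₀ + ((b : Icc (-τ₀) τ₀) : ℝ)) / (2 * τ₀) = 1 := by
      rw [hb']; field_simp; ring
    rw [e1, e2, zero_smul, one_smul, sub_zero, Matrix.sub_mulVec,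
      Matrix.one_mulVec]
    abel
  have hkill1 : ∀ x, (Pm lam).mulVec ((P lam x) a) = 0 := by
    intro x
    rw [hPa, Matrix.mulVec_sub, Matrix.mulVec_mulVec, hPmProj, sub_self]
  have hkill2 : ∀ x, (1 - Pp lam).mulVec ((P lam x) b) = 0 := by
    intro x
    rw [hPb, Matrix.sub_mulVec, Matrix.one_mulVec, Matrix.mulVec_mulVec,
      hPpProj, sub_self]
  refine ⟨?_, ?_, ?_⟩
  · -- idempotent
    intro x
    ext t i
    rw [hP lam (P lam x) t]
    have e1 : (P lam x) (⟨-τ₀, by constructor <;> linarith⟩ : Icc (-τ₀) τ₀) = (P lam x) a := rfl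
    have e2 : (P lam x) (⟨τ₀, by constructor <;> linarith⟩ : Icc (-τ₀) τ₀) = (P lam x) b := rfl
    rw [e1, e2, hkill1, hkill2, smul_zero, smul_zero, sub_zero, sub_zero]
  · -- boundedness
    set L1 := LinearMap.toContinuousLinearMap (Matrix.mulVecLin (Pm lam)) with hL1
    set L2 := LinearMap.toContinuousLinearMap (Matrix.mulVecLin (1 - Pp lam)) with hL2
    refine ⟨1 + ‖L1‖ + ‖L2‖, fun x => ?_⟩
    have hMnn : (0:ℝ) ≤ (1 + ‖L1‖ + ‖L2‖) * ‖x‖ := by positivity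
    refine (ContinuousMap.norm_le _ hMnn).2 fun t => ?_
    rw [hP]
    have hf : |(τ₀ - (t : ℝ)) / (2 * τ₀)| ≤ 1 := by
      rw [abs_div, abs_of_pos (by positivity : (0:ℝ) < 2 * τ₀),
        div_le_one (by positivity)]
      have h1 := t.2.1
      have h2 := t.2.2
      rw [abs_le]; constructor <;> linarith
    have hg : |(τ₀ + (t : ℝ)) / (2 * τ₀)| ≤ 1 := by
      rw [abs_div, abs_of_pos (by positivity : (0:ℝ) < 2 * τ₀),
        div_le_one (by positivity)]
      have h1 := t.2.1
      have h2 := t.2.2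
      rw [abs_le]; constructor <;> linarith
    have hxa : ‖x (⟨-τ₀, by constructor <;> linarith⟩ : Icc (-τ₀) τ₀)‖ ≤ ‖x‖ :=
      ContinuousMap.norm_coe_le_norm x _
    have hxb : ‖x (⟨τ₀, by constructor <;> linarith⟩ : Icc (-τ₀) τ₀)‖ ≤ ‖x‖ :=
      ContinuousMap.norm_coe_le_norm x _
    have hxt : ‖x t‖ ≤ ‖x‖ := ContinuousMap.norm_coe_le_norm x t
    have hm1 : ‖(Pm lam).mulVec (x (⟨-τ₀, by constructor <;> linarith⟩ : Icc (-τ₀) τ₀))‖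
        ≤ ‖L1‖ * ‖x‖ := by
      calc ‖(Pm lam).mulVec (x (⟨-τ₀, by constructor <;> linarith⟩ : Icc (-τ₀) τ₀))‖
          = ‖L1 (x (⟨-τ₀, by constructor <;> linarith⟩ : Icc (-τ₀) τ₀))‖ := rfl
        _ ≤ ‖L1‖ * ‖x (⟨-τ₀, by constructor <;> linarith⟩ : Icc (-τ₀) τ₀)‖ :=
            L1.le_opNorm _
        _ ≤ ‖L1‖ * ‖x‖ := by
            exact mul_le_mul_of_nonneg_left hxa (norm_nonneg _)
    have hm2 : ‖(1 - Pp lam).mulVec (x (⟨τ₀, by constructor <;> linarith⟩ : Icc (-τ₀) τ₀))‖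
        ≤ ‖L2‖ * ‖x‖ := by
      calc ‖(1 - Pp lam).mulVec (x (⟨τ₀, by constructor <;> linarith⟩ : Icc (-τ₀) τ₀))‖
          = ‖L2 (x (⟨τ₀, by constructor <;> linarith⟩ : Icc (-τ₀) τ₀))‖ := rfl
        _ ≤ ‖L2‖ * ‖x (⟨τ₀, by constructor <;> linarith⟩ : Icc (-τ₀) τ₀)‖ :=
            L2.le_opNorm _
        _ ≤ ‖L2‖ * ‖x‖ := by
            exact mul_le_mul_of_nonneg_left hxb (norm_nonneg _)
    calc ‖x t - ((τ₀ - (t:ℝ)) / (2 * τ₀)) •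
            (Pm lam).mulVec (x (⟨-τ₀, by constructor <;> linarith⟩ : Icc (-τ₀) τ₀))
          - ((τ₀ + (t:ℝ)) / (2 * τ₀)) •
            ((1 - Pp lam).mulVec (x (⟨τ₀, by constructor <;> linarith⟩ : Icc (-τ₀) τ₀)))‖
        ≤ ‖x t - ((τ₀ - (t:ℝ)) / (2 * τ₀)) •
            (Pm lam).mulVec (x (⟨-τ₀, by constructor <;> linarith⟩ : Icc (-τ₀) τ₀))‖
          + ‖((τ₀ + (t:ℝ)) / (2 * τ₀)) •
            ((1 - Pp lam).mulVec (x (⟨τ₀, by constructor <;> linarith⟩ : Icc (-τ₀) τ₀)))‖ :=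
          norm_sub_le _ _
      _ ≤ ‖x t‖ + ‖((τ₀ - (t:ℝ)) / (2 * τ₀)) •
            (Pm lam).mulVec (x (⟨-τ₀, by constructor <;> linarith⟩ : Icc (-τ₀) τ₀))‖
          + ‖((τ₀ + (t:ℝ)) / (2 * τ₀)) •
            ((1 - Pp lam).mulVec (x (⟨τ₀, by constructor <;> linarith⟩ : Icc (-τ₀) τ₀)))‖ := by
          gcongr
          exact norm_sub_le _ _
      _ ≤ ‖x‖ + 1 * (‖L1‖ * ‖x‖) + 1 * (‖L2‖ * ‖x‖) := by
          refine add_le_add (add_le_add hxt ?_) ?_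
          · rw [norm_smul, Real.norm_eq_abs]
            exact mul_le_mul hf hm1 (norm_nonneg _) zero_le_one
          · rw [norm_smul, Real.norm_eq_abs]
            exact mul_le_mul hg hm2 (norm_nonneg _) zero_le_one
      _ = (1 + ‖L1‖ + ‖L2‖) * ‖x‖ := by ring
  · -- range
    ext x
    simp only [SetLike.mem_coe, LinearMap.mem_range, Set.mem_setOf_eq]
    constructor
    · rintro ⟨y, rfl⟩
      refine ⟨hkill1 y, ?_⟩
      have e2 : (P lam y) (⟨τ₀, by constructor <;> linarith⟩ : Icc (-τ₀) τ₀) = (P lam y) b := rfl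
      rw [e2, hPb, Matrix.mulVec_mulVec, hPpProj]
    · rintro ⟨h1, h2⟩
      refine ⟨x, ?_⟩
      ext t
      rw [hP]
      have h2' : (1 - Pp lam).mulVec (x (⟨τ₀, by constructor <;> linarith⟩ : Icc (-τ₀) τ₀)) = 0 := by
        rw [Matrix.sub_mulVec, Matrix.one_mulVec, h2, sub_self]
      rw [h1, h2', smul_zero, smul_zero, sub_zero, sub_zero]
end

section
/- Let a : ℝ → (−∞,0] be continuous with a(t) ≤ −a⁺ < 0 for |t| ≥ t₀, and B ∈ GL(d,ℝ) symmetric with k positive and d−k negative eigenvalues. Then the system ẋ = a(t)Bx has an exponential dichotomy on (−∞,0] with invariant projector P = χ_{(0,∞)}(B) (the spectral projection onto the positive eigenspaces of B), constants K = e^{μ(B)a⁺t₀} and α = μ(B)a⁺, where μ(B) is the minimum absolute value of the eigenvalues of B. -/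
open Matrix intervalIntegral

/-- The operator norm (for the Euclidean norm on `ℝᵈ`) of a real `d × d` matrix. -/
noncomputable def matOpNorm {d : ℕ} (M : Matrix (Fin d) (Fin d) ℝ) : ℝ :=
  ‖Matrix.toEuclideanCLM (𝕜 := ℝ) M‖

lemma matOpNorm_nonneg {d : ℕ} (M : Matrix (Fin d) (Fin d) ℝ) : 0 ≤ matOpNorm M :=
  norm_nonneg _

lemma matOpNorm_mul_le {d : ℕ} (M N : Matrix (Fin d) (Fin d) ℝ) :
    matOpNorm (M * N) ≤ matOpNorm M * matOpNorm N := by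
  unfold matOpNorm
  rw [_root_.map_mul]
  exact norm_mul_le _ _

lemma matOpNorm_orth_le_one {d : ℕ} (U : Matrix (Fin d) (Fin d) ℝ) (h2 : Uᵀ * U = 1) :
    matOpNorm U ≤ 1 := by
  have hstar : star U = Uᵀ := by
    ext i j
    simp [Matrix.conjTranspose_apply]
  have key : ‖toEuclideanCLM (𝕜 := ℝ) U‖ * ‖toEuclideanCLM (𝕜 := ℝ) U‖
      = ‖(1 : EuclideanSpace ℝ (Fin d) →L[ℝ] EuclideanSpace ℝ (Fin d))‖ := by
    rw [← CStarRing.norm_star_mul_self]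
    congr 1
    rw [← map_star, ← _root_.map_mul, hstar, h2, _root_.map_one]
  have h1le : ‖(1 : EuclideanSpace ℝ (Fin d) →L[ℝ] EuclideanSpace ℝ (Fin d))‖ ≤ 1 := by
    rw [ContinuousLinearMap.one_def]
    exact ContinuousLinearMap.norm_id_le
  unfold matOpNorm
  nlinarith [norm_nonneg (toEuclideanCLM (𝕜 := ℝ) U)]

lemma matOpNorm_diagonal_le {d : ℕ} (w : Fin d → ℝ) (C : ℝ) (hC : 0 ≤ C)
    (hw : ∀ i, |w i| ≤ C) : matOpNorm (Matrix.diagonal w) ≤ C := by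
  unfold matOpNorm
  refine ContinuousLinearMap.opNorm_le_bound _ hC fun x => ?_
  have hcoord : ∀ i, (toEuclideanCLM (𝕜 := ℝ) (Matrix.diagonal w) x) i = w i * x i := by
    intro i
    have h := congrFun (ofLp_toEuclideanCLM (𝕜 := ℝ) (Matrix.diagonal w) x) i
    simpa [Matrix.toLin'_apply, Matrix.mulVec_diagonal] using h
  rw [EuclideanSpace.norm_eq, EuclideanSpace.norm_eq]
  have hsum : ∑ i, ‖(toEuclideanCLM (𝕜 := ℝ) (Matrix.diagonal w) x) i‖ ^ 2
      ≤ C ^ 2 * ∑ i, ‖x i‖ ^ 2 := by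
    rw [Finset.mul_sum]
    refine Finset.sum_le_sum fun i _ => ?_
    rw [hcoord i, Real.norm_eq_abs, Real.norm_eq_abs, abs_mul]
    have h1 : |w i| * |x i| ≤ C * |x i| := mul_le_mul_of_nonneg_right (hw i) (abs_nonneg _)
    nlinarith [abs_nonneg (x i), mul_nonneg (abs_nonneg (w i)) (abs_nonneg (x i))]
  calc Real.sqrt (∑ i, ‖(toEuclideanCLM (𝕜 := ℝ) (Matrix.diagonal w) x) i‖ ^ 2)
      ≤ Real.sqrt (C ^ 2 * ∑ i, ‖x i‖ ^ 2) := Real.sqrt_le_sqrt hsum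
    _ = C * Real.sqrt (∑ i, ‖x i‖ ^ 2) := by
        rw [Real.sqrt_mul (sq_nonneg C), Real.sqrt_sq hC]

lemma matOpNorm_conj_le {d : ℕ} (U : Matrix (Fin d) (Fin d) ℝ)
    (h1 : U * Uᵀ = 1) (h2 : Uᵀ * U = 1) (w : Fin d → ℝ) (C : ℝ) (hC : 0 ≤ C)
    (hw : ∀ i, |w i| ≤ C) : matOpNorm (Uᵀ * Matrix.diagonal w * U) ≤ C := by
  have hU : matOpNorm U ≤ 1 := matOpNorm_orth_le_one U h2
  have hUt : matOpNorm Uᵀ ≤ 1 := by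
    refine matOpNorm_orth_le_one Uᵀ ?_
    rw [Matrix.transpose_transpose]
    exact h1
  have hD : matOpNorm (Matrix.diagonal w) ≤ C := matOpNorm_diagonal_le w C hC hw
  have m1 := matOpNorm_mul_le (Uᵀ * Matrix.diagonal w) U
  have m2 := matOpNorm_mul_le Uᵀ (Matrix.diagonal w)
  nlinarith [matOpNorm_nonneg U, matOpNorm_nonneg Uᵀ, matOpNorm_nonneg (Matrix.diagonal w),
    matOpNorm_nonneg (Uᵀ * Matrix.diagonal w)]

lemma integral_bound_aux (a : ℝ → ℝ) (ha : Continuous a) (hanp : ∀ t, a t ≤ 0)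
    (t₀ aplus : ℝ) (ht₀ : 0 < t₀) (haplus : 0 < aplus)
    (hbound : ∀ t : ℝ, t₀ ≤ |t| → a t ≤ -aplus)
    (s t : ℝ) (hst : s ≤ t) (ht : t ≤ 0) :
    (∫ r in s..t, a r) ≤ aplus * t₀ - aplus * (t - s) := by
  have hia : ∀ u v : ℝ, IntervalIntegrable a MeasureTheory.volume u v :=
    fun u v => ha.intervalIntegrable u v
  have hnp : ∀ u v : ℝ, u ≤ v → (∫ r in u..v, a r) ≤ 0 := by
    intro u v huv
    have h := integral_nonneg (f := fun r => -a r) (μ := MeasureTheory.volume) huv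
      (fun x _ => neg_nonneg.mpr (hanp x))
    rw [integral_neg] at h
    linarith
  by_cases hcase : t ≤ -t₀
  · have hle : ∀ x ∈ Set.Icc s t, a x ≤ -aplus := by
      intro x hx
      refine hbound x ?_
      have hx2 : x ≤ -t₀ := le_trans hx.2 hcase
      rw [abs_of_nonpos (by linarith)]
      linarith
    have := integral_mono_on hst (hia s t) intervalIntegrable_const hle
    rw [integral_const] at this
    simp only [smul_eq_mul] at this
    nlinarith
  · push_neg at hcase
    by_cases hs : -t₀ ≤ s
    · have h0 : (∫ r in s..t, a r) ≤ 0 := hnp s t hst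
      nlinarith
    · push_neg at hs
      have hsplit : (∫ r in s..(-t₀), a r) + (∫ r in (-t₀)..t, a r) = ∫ r in s..t, a r :=
        integral_add_adjacent_intervals (hia s (-t₀)) (hia (-t₀) t)
      have h1 : (∫ r in s..(-t₀), a r) ≤ (-t₀ - s) * (-aplus) := by
        have hle : ∀ x ∈ Set.Icc s (-t₀), a x ≤ -aplus := by
          intro x hx
          refine hbound x ?_
          rw [abs_of_nonpos (by linarith [hx.2])]
          linarith [hx.2]
        have := integral_mono_on hs.le (hia s (-t₀))
          intervalIntegrable_const hle
        rw [integral_const] at this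
        simpa using this
      have h2 : (∫ r in (-t₀)..t, a r) ≤ 0 := hnp (-t₀) t hcase.le
      nlinarith

/-- Let `a : ℝ → (-∞, 0]` be continuous with `a(t) ≤ -a⁺ < 0` for
`|t| ≥ t₀`, and `B` symmetric invertible with `k` positive and `d - k` negative
eigenvalues (orthonormal eigenbasis `e`, eigenvalues `ν`). Then `ẋ = a(t)Bx`, whose
transition matrix is `Φ(t,s) = exp((∫ₛᵗ a) B)`, has an exponential dichotomy on
`(-∞, 0]` with invariant projector `P = χ_{(0,∞)}(B)` (the spectral projection onto
the positive eigenspaces of `B`), constants `K = e^{μ(B) a⁺ t₀}` and `α = μ(B) a⁺`,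
where `μ(B)` is the minimal absolute value of the eigenvalues of `B`. -/
theorem scalar_family_exponential_dichotomy {d k : ℕ}
    (a : ℝ → ℝ) (ha : Continuous a) (hanp : ∀ t, a t ≤ 0)
    (t₀ aplus : ℝ) (ht₀ : 0 < t₀) (haplus : 0 < aplus)
    (hbound : ∀ t : ℝ, t₀ ≤ |t| → a t ≤ -aplus)
    (B : Matrix (Fin d) (Fin d) ℝ) (hB : B.IsSymm) (hBinv : IsUnit B)
    (ν : Fin d → ℝ) (e : Fin d → (Fin d → ℝ))
    (hortho : ∀ i j, dotProduct (e i) (e j) = if i = j then 1 else 0)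
    (heig : ∀ i, B.mulVec (e i) = ν i • e i)
    (hpos : ∀ i : Fin d, (i : ℕ) < k → 0 < ν i)
    (hneg : ∀ i : Fin d, k ≤ (i : ℕ) → ν i < 0)
    (P : Matrix (Fin d) (Fin d) ℝ)
    (hP : P = ∑ i : Fin d, if (i : ℕ) < k then Matrix.vecMulVec (e i) (e i) else 0)
    (μ : ℝ) (hμ : IsLeast (Set.range fun i : Fin d => |ν i|) μ) :
    P * P = P ∧
    (∀ t s : ℝ, NormedSpace.exp ((∫ r in s..t, a r) • B) * P
      = P * NormedSpace.exp ((∫ r in s..t, a r) • B)) ∧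
    (∀ s t : ℝ, s ≤ t → t ≤ 0 →
      matOpNorm (NormedSpace.exp ((∫ r in s..t, a r) • B) * P)
        ≤ Real.exp (μ * aplus * t₀) * Real.exp (-(μ * aplus) * (t - s)) ∧
      matOpNorm (NormedSpace.exp ((∫ r in t..s, a r) • B) * (1 - P))
        ≤ Real.exp (μ * aplus * t₀) * Real.exp (-(μ * aplus) * (t - s))) := by
  classical
  set U : Matrix (Fin d) (Fin d) ℝ := Matrix.of fun i j => e i j with hUdef
  have hUUt : U * Uᵀ = 1 := by
    ext i j
    simpa [Matrix.mul_apply, Matrix.one_apply, dotProduct, hUdef] using hortho i j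
  have hUtU : Uᵀ * U = 1 := mul_eq_one_comm.mp hUUt
  set Cj : (Fin d → ℝ) → Matrix (Fin d) (Fin d) ℝ :=
    fun w => Uᵀ * Matrix.diagonal w * U with hCjdef
  have hcancel : ∀ X : Matrix (Fin d) (Fin d) ℝ, U * (Uᵀ * X) = X := by
    intro X
    rw [← Matrix.mul_assoc, hUUt, Matrix.one_mul]
  have hCmul : ∀ w w', Cj w * Cj w' = Cj (w * w') := by
    intro w w'
    calc Cj w * Cj w'
        = Uᵀ * (Matrix.diagonal w * (U * (Uᵀ * (Matrix.diagonal w' * U)))) := by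
          simp only [hCjdef, Matrix.mul_assoc]
      _ = Uᵀ * (Matrix.diagonal w * (Matrix.diagonal w' * U)) := by rw [hcancel]
      _ = Cj (w * w') := by
          simp only [hCjdef, Matrix.mul_assoc, ← Matrix.mul_assoc (Matrix.diagonal w),
            Matrix.diagonal_mul_diagonal]
          rfl
  have hCone : Cj (fun _ => 1) = 1 := by
    simp only [hCjdef]
    rw [Matrix.diagonal_one, Matrix.mul_one, hUtU]
  have hCsub : ∀ w w', Cj w - Cj w' = Cj (w - w') := by
    intro w w'
    simp only [hCjdef]
    have hd : Matrix.diagonal (w - w') = Matrix.diagonal w - Matrix.diagonal w' := by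
      ext i j
      by_cases hij : i = j <;> simp [Matrix.diagonal_apply, hij]
    rw [hd, mul_sub, sub_mul]
  have hCapply : ∀ (w : Fin d → ℝ) (j l : Fin d), Cj w j l = ∑ i, e i j * w i * e i l := by
    intro w j l
    simp only [hCjdef, hUdef]
    simp [Matrix.mul_apply, Matrix.diagonal_apply, Finset.sum_ite_eq, mul_ite, ite_mul,
      Finset.sum_mul, Finset.mul_sum]
  have hPC : P = Cj (fun i => if (i : ℕ) < k then 1 else 0) := by
    rw [hP]
    ext j l
    rw [Matrix.sum_apply, hCapply]
    refine Finset.sum_congr rfl fun i _ => ?_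
    by_cases h : (i : ℕ) < k
    · simp [h, Matrix.vecMulVec_apply]
    · simp [h]
  have hBU : B * Uᵀ = Uᵀ * Matrix.diagonal ν := by
    ext j i
    have h := congrFun (heig i) j
    simp only [Matrix.mulVec, dotProduct, Pi.smul_apply, smul_eq_mul] at h
    simp only [Matrix.mul_apply, Matrix.transpose_apply, hUdef, Matrix.of_apply,
      Matrix.diagonal_apply, mul_ite, ite_mul, mul_zero, zero_mul, Finset.sum_ite_eq,
      Finset.mem_univ, if_true]
    rw [h]
    simp [Finset.sum_ite_eq', mul_comm]
  have hBrep : B = Cj ν := by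
    calc B = B * (Uᵀ * U) := by rw [hUtU, Matrix.mul_one]
      _ = (B * Uᵀ) * U := by rw [Matrix.mul_assoc]
      _ = Cj ν := by rw [hBU]
  have hsmul : ∀ c : ℝ, c • B = Cj (fun i => c * ν i) := by
    intro c
    rw [hBrep]
    show c • (Uᵀ * Matrix.diagonal ν * U) = Uᵀ * Matrix.diagonal (fun i => c * ν i) * U
    have hd : Matrix.diagonal (fun i => c * ν i) = c • Matrix.diagonal ν := by
      rw [← Matrix.diagonal_smul]
      rfl
    rw [hd, mul_smul_comm, smul_mul_assoc]
  have hexpc : ∀ c : ℝ, NormedSpace.exp (c • B) = Cj (fun i => Real.exp (c * ν i)) := by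
    intro c
    rw [hsmul c]
    have hV : (↑(⟨U, Uᵀ, hUUt, hUtU⟩ : (Matrix (Fin d) (Fin d) ℝ)ˣ)⁻¹
        : Matrix (Fin d) (Fin d) ℝ) = Uᵀ := rfl
    have h := Matrix.exp_units_conj' (⟨U, Uᵀ, hUUt, hUtU⟩ : (Matrix (Fin d) (Fin d) ℝ)ˣ)
      (Matrix.diagonal fun i => c * ν i)
    rw [hV] at h
    show NormedSpace.exp (Uᵀ * Matrix.diagonal (fun i => c * ν i) * U)
      = Uᵀ * Matrix.diagonal (fun i => Real.exp (c * ν i)) * U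
    rw [show ((⟨U, Uᵀ, hUUt, hUtU⟩ : (Matrix (Fin d) (Fin d) ℝ)ˣ) : Matrix (Fin d) (Fin d) ℝ)
      = U from rfl] at h
    rw [h, Matrix.exp_diagonal]
    congr 2
    funext i
    rw [Pi.exp_def]
    rw [← Real.exp_eq_exp_ℝ]
  -- facts about μ
  obtain ⟨i₀, hi₀⟩ := hμ.1
  have hμ0 : 0 ≤ μ := by rw [← hi₀]; exact abs_nonneg _
  have hμle : ∀ i, μ ≤ |ν i| := fun i => hμ.2 ⟨i, rfl⟩
  refine ⟨?_, ?_, ?_⟩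
  · rw [hPC, hCmul]
    refine congrArg Cj ?_
    funext i
    by_cases h : (i : ℕ) < k <;> simp [h]
  · intro t s
    rw [hPC, hexpc, hCmul, hCmul]
    refine congrArg Cj ?_
    funext i
    simp [mul_comm]
  · intro s t hst ht
    have hc0 : (∫ r in s..t, a r) ≤ 0 := by
      have h := integral_nonneg (f := fun r => -a r) (μ := MeasureTheory.volume) hst
        (fun x _ => neg_nonneg.mpr (hanp x))
      rw [integral_neg] at h
      linarith
    have hcK : (∫ r in s..t, a r) ≤ aplus * t₀ - aplus * (t - s) :=
      integral_bound_aux a ha hanp t₀ aplus ht₀ haplus hbound s t hst ht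
    set c : ℝ := ∫ r in s..t, a r with hcdef
    have hCb : Real.exp (μ * aplus * t₀) * Real.exp (-(μ * aplus) * (t - s))
        = Real.exp (μ * aplus * t₀ + -(μ * aplus) * (t - s)) := (Real.exp_add _ _).symm
    have hCbpos : (0:ℝ) < Real.exp (μ * aplus * t₀ + -(μ * aplus) * (t - s)) := Real.exp_pos _
    constructor
    · rw [hexpc, hPC, hCmul, hCb]
      refine matOpNorm_conj_le U hUUt hUtU _ _ hCbpos.le fun i => ?_
      by_cases h : (i : ℕ) < k
      · have hν : μ ≤ ν i := by
          have := hμle i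
          rwa [abs_of_pos (hpos i h)] at this
        simp only [Pi.mul_apply, h, if_true, mul_one]
        rw [abs_of_pos (Real.exp_pos _)]
        refine Real.exp_le_exp.mpr ?_
        nlinarith [mul_nonneg (sub_nonneg.mpr hν) (neg_nonneg.mpr hc0),
          mul_nonneg (show (0:ℝ) ≤ aplus * t₀ - aplus * (t - s) - c by linarith) hμ0]
      · simp only [Pi.mul_apply, h, if_false, mul_zero, abs_zero]
        exact hCbpos.le
    · have hsymm : (∫ r in t..s, a r) = -c := by
        rw [hcdef]
        exact integral_symm s t
      rw [hsymm]
      have h1P : 1 - P = Cj ((fun _ : Fin d => (1:ℝ)) - fun i : Fin d => if (i : ℕ) < k then (1:ℝ) else 0) := by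
        rw [← hCsub, hCone, hPC]
      rw [hexpc, h1P, hCmul, hCb]
      refine matOpNorm_conj_le U hUUt hUtU _ _ hCbpos.le fun i => ?_
      by_cases h : (i : ℕ) < k
      · simp only [Pi.mul_apply, Pi.sub_apply, h, if_true, sub_self, mul_zero, abs_zero]
        exact hCbpos.le
      · have hν : ν i ≤ -μ := by
          have h2 := hμle i
          rw [abs_of_neg (hneg i (le_of_not_gt h))] at h2
          linarith
        simp only [Pi.mul_apply, Pi.sub_apply, h, if_false, sub_zero, mul_one]
        rw [abs_of_pos (Real.exp_pos _)]
        refine Real.exp_le_exp.mpr ?_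
        nlinarith [mul_nonneg (neg_nonneg.mpr hc0) (show (0:ℝ) ≤ -μ - ν i by linarith),
          mul_nonneg (show (0:ℝ) ≤ aplus * t₀ - aplus * (t - s) - c by linarith) hμ0]
end
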